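/- arXiv:2401.09352 — 2 statements merged into one kernel-verified Lean document; each statement's English description precedes it below -/
import Mathlib

section
/- For a skew-symmetric 3×3 matrix [r]_× with coefficient vector r ∈ ℝ³ and ζ = ‖r‖, the matrix Exp([r]_×) = I + (sin ζ / ζ)[r]_× + ((1 - cos ζ)/ζ²)[r]_ײ is a rotation matrix: it is orthogonal with determinant 1. -/
/-!
`K = [r]_×` satisfies `Kᵀ = -K` and `K³ = -ζ² K`. Hence for `R = 1 + a K + b K²` the odd powers
cancel in `Rᵀ R = (1 - a K + b K²)(1 + a K + b K²) = 1 + (2b - a² - ζ² b²) K²`, and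
`det R = (1 - b ζ²)² + a² ζ²` is the product of `1 + a λ + b λ²` over the eigenvalues
`λ = 0, ±iζ` of `K`. For `a = sin ζ / ζ`, `b = (1 - cos ζ) / ζ²` both identities reduce to
`sin² ζ + cos² ζ = 1`.
-/

open Matrix

def skew (r : Fin 3 → ℝ) : Matrix (Fin 3) (Fin 3) ℝ :=
  !![0, -r 2, r 1; r 2, 0, -r 0; -r 1, r 0, 0]

theorem Matrix.transpose_mul_self_eq_one_of_transpose_eq_neg {n R : Type*} [Fintype n]
    [DecidableEq n] [CommRing R] {K : Matrix n n R} {t a b : R} (hK : Kᵀ = -K)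
    (hK3 : K * K * K = (-t) • K) (hab : 2 * b = a ^ 2 + t * b ^ 2) :
    (1 + a • K + b • (K * K))ᵀ * (1 + a • K + b • (K * K)) = 1 := by
  have hK3' : K * (K * K) = (-t) • K := by rw [← mul_assoc, hK3]
  have hK4 : K * K * (K * K) = (-t) • (K * K) := by rw [← mul_assoc, hK3, smul_mul_assoc]
  simp only [transpose_add, transpose_one, transpose_smul, transpose_mul, hK, mul_add, add_mul,
    one_mul, mul_one, smul_mul_assoc, mul_smul_comm, smul_smul, neg_mul, mul_neg, smul_neg, hK3,
    hK3', hK4]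
  match_scalars
  · ring
  · ring
  · linear_combination hab

theorem skew_transpose (r : Fin 3 → ℝ) : (skew r)ᵀ = -skew r := by
  ext i j; fin_cases i <;> fin_cases j <;> simp [skew]

theorem skew_mul_skew_mul_skew (r : Fin 3 → ℝ) :
    skew r * skew r * skew r = (-∑ i, r i ^ 2) • skew r := by
  ext i j; fin_cases i <;> fin_cases j <;>
    simp [skew, Matrix.mul_apply, Fin.sum_univ_three] <;> ring

theorem det_one_add_smul_skew_add_smul_skew_mul_skew (r : Fin 3 → ℝ) (a b : ℝ) :
    (1 + a • skew r + b • (skew r * skew r)).det =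
      (1 - b * ∑ i, r i ^ 2) ^ 2 + a ^ 2 * ∑ i, r i ^ 2 := by
  simp [det_fin_three, skew, Fin.sum_univ_three, Matrix.one_fin_three]
  ring

theorem stmt_16 (r : Fin 3 → ℝ) (ζ : ℝ) (hζ : ζ = Real.sqrt (∑ i, (r i) ^ 2))
    (hpos : 0 < ζ) :
    letI R : Matrix (Fin 3) (Fin 3) ℝ :=
      1 + (Real.sin ζ / ζ) • skew r + ((1 - Real.cos ζ) / ζ ^ 2) • (skew r * skew r)
    Rᵀ * R = 1 ∧ R.det = 1 := by
  have hsq : ∑ i, r i ^ 2 = ζ ^ 2 := by rw [hζ, Real.sq_sqrt (by positivity)]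
  have hζ0 : ζ ≠ 0 := hpos.ne'
  have hsc := Real.sin_sq_add_cos_sq ζ
  refine ⟨transpose_mul_self_eq_one_of_transpose_eq_neg (skew_transpose r)
    (skew_mul_skew_mul_skew r) ?_, ?_⟩
  · rw [hsq]
    field_simp
    linear_combination -hsc
  · rw [det_one_add_smul_skew_add_smul_skew_mul_skew, hsq]
    field_simp
    linear_combination hsc
end

section
/- For r ∈ ℝ³ with 0 < ‖r‖ < π, the Rodrigues exponential Exp([r]_×) is injective on the open ball of radius π: if Exp([r]_×) = Exp([s]_×) with ‖r‖, ‖s‖ < π, then r = s. -/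
open Matrix

noncomputable def ExpR (r : Fin 3 → ℝ) : Matrix (Fin 3) (Fin 3) ℝ :=
  1 + (Real.sin (Real.sqrt (∑ i, (r i) ^ 2)) / Real.sqrt (∑ i, (r i) ^ 2)) • skew r
    + ((1 - Real.cos (Real.sqrt (∑ i, (r i) ^ 2))) / (Real.sqrt (∑ i, (r i) ^ 2)) ^ 2) •
      (skew r * skew r)

set_option maxHeartbeats 1000000 in
theorem stmt_17 (r s : Fin 3 → ℝ)
    (hr : Real.sqrt (∑ i, (r i) ^ 2) < Real.pi)
    (hs : Real.sqrt (∑ i, (s i) ^ 2) < Real.pi)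
    (heq : ExpR r = ExpR s) : r = s := by
  have e00 := congrFun (congrFun heq 0) 0
  have e11 := congrFun (congrFun heq 1) 1
  have e22 := congrFun (congrFun heq 2) 2
  have e21 := congrFun (congrFun heq 2) 1
  have e12 := congrFun (congrFun heq 1) 2
  have e02 := congrFun (congrFun heq 0) 2
  have e20 := congrFun (congrFun heq 2) 0
  have e10 := congrFun (congrFun heq 1) 0
  have e01 := congrFun (congrFun heq 0) 1
  simp [ExpR, skew, Matrix.mul_apply, Fin.sum_univ_three, Matrix.one_apply] at e00 e11 e22 e21 e12 e02 e20 e10 e01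
  clear heq
  rw [Fin.sum_univ_three] at hr hs
  set a := Real.sqrt (r 0 ^ 2 + r 1 ^ 2 + r 2 ^ 2) with hadef
  set b := Real.sqrt (s 0 ^ 2 + s 1 ^ 2 + s 2 ^ 2) with hbdef
  clear_value a b
  have hSr : (0:ℝ) ≤ r 0 ^ 2 + r 1 ^ 2 + r 2 ^ 2 := by positivity
  have hSs : (0:ℝ) ≤ s 0 ^ 2 + s 1 ^ 2 + s 2 ^ 2 := by positivity
  have ha0 : 0 ≤ a := by rw [hadef]; exact Real.sqrt_nonneg _
  have hb0 : 0 ≤ b := by rw [hbdef]; exact Real.sqrt_nonneg _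
  have haS : a ^ 2 = r 0 ^ 2 + r 1 ^ 2 + r 2 ^ 2 := by rw [hadef]; exact Real.sq_sqrt hSr
  have hbS : b ^ 2 = s 0 ^ 2 + s 1 ^ 2 + s 2 ^ 2 := by rw [hbdef]; exact Real.sq_sqrt hSs
  have hfa : (1 - Real.cos a) / a ^ 2 * a ^ 2 = 1 - Real.cos a := by
    rcases eq_or_lt_of_le ha0 with h | h
    · rw [← h]; norm_num
    · exact div_mul_cancel₀ _ (pow_ne_zero 2 (ne_of_gt h))
  have hfb : (1 - Real.cos b) / b ^ 2 * b ^ 2 = 1 - Real.cos b := by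
    rcases eq_or_lt_of_le hb0 with h | h
    · rw [← h]; norm_num
    · exact div_mul_cancel₀ _ (pow_ne_zero 2 (ne_of_gt h))
  have hcos : Real.cos a = Real.cos b := by
    linear_combination ((1:ℝ)/2) * (e00 + e11 + e22) + hfa - hfb
      - ((1 - Real.cos a) / a ^ 2) * haS + ((1 - Real.cos b) / b ^ 2) * hbS
  have hab : a = b := by
    apply Real.injOn_cos ⟨ha0, le_of_lt hr⟩ ⟨hb0, le_of_lt hs⟩ hcos
  rcases eq_or_lt_of_le ha0 with h0 | hpos
  · -- a = 0, so both r and s are zero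
    have hb0' : b = 0 := by rw [← hab, ← h0]
    have hSr0 : r 0 ^ 2 + r 1 ^ 2 + r 2 ^ 2 = 0 := by rw [← haS, ← h0]; ring
    have hSs0 : s 0 ^ 2 + s 1 ^ 2 + s 2 ^ 2 = 0 := by rw [← hbS, hb0']; ring
    funext i
    fin_cases i
    · have h1 : r 0 ^ 2 = 0 := by linarith [sq_nonneg (r 0), sq_nonneg (r 1), sq_nonneg (r 2), sq_nonneg (s 0), sq_nonneg (s 1), sq_nonneg (s 2)]
      have h2 : s 0 ^ 2 = 0 := by linarith [sq_nonneg (r 0), sq_nonneg (r 1), sq_nonneg (r 2), sq_nonneg (s 0), sq_nonneg (s 1), sq_nonneg (s 2)]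
      simpa using (sq_eq_zero_iff.mp h1).trans (sq_eq_zero_iff.mp h2).symm
    · have h1 : r 1 ^ 2 = 0 := by linarith [sq_nonneg (r 0), sq_nonneg (r 1), sq_nonneg (r 2), sq_nonneg (s 0), sq_nonneg (s 1), sq_nonneg (s 2)]
      have h2 : s 1 ^ 2 = 0 := by linarith [sq_nonneg (r 0), sq_nonneg (r 1), sq_nonneg (r 2), sq_nonneg (s 0), sq_nonneg (s 1), sq_nonneg (s 2)]
      simpa using (sq_eq_zero_iff.mp h1).trans (sq_eq_zero_iff.mp h2).symm
    · have h1 : r 2 ^ 2 = 0 := by linarith [sq_nonneg (r 0), sq_nonneg (r 1), sq_nonneg (r 2), sq_nonneg (s 0), sq_nonneg (s 1), sq_nonneg (s 2)]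
      have h2 : s 2 ^ 2 = 0 := by linarith [sq_nonneg (r 0), sq_nonneg (r 1), sq_nonneg (r 2), sq_nonneg (s 0), sq_nonneg (s 1), sq_nonneg (s 2)]
      simpa using (sq_eq_zero_iff.mp h1).trans (sq_eq_zero_iff.mp h2).symm
  · -- a > 0
    have hsin : 0 < Real.sin a := Real.sin_pos_of_pos_of_lt_pi hpos hr
    have hg : 0 < Real.sin a / a := div_pos hsin hpos
    rw [← hab] at e21 e12 e02 e20 e10 e01
    have h0' : Real.sin a / a * r 0 = Real.sin a / a * s 0 := by linarith
    have h1' : Real.sin a / a * r 1 = Real.sin a / a * s 1 := by linarith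
    have h2' : Real.sin a / a * r 2 = Real.sin a / a * s 2 := by linarith
    funext i
    fin_cases i
    · exact mul_left_cancel₀ (ne_of_gt hg) h0'
    · exact mul_left_cancel₀ (ne_of_gt hg) h1'
    · exact mul_left_cancel₀ (ne_of_gt hg) h2'
end
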